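/- (Generalized Schur test) Let (X, μ) be a measure space, K : X × X → [0,∞) measurable, 1 < p ≤ q < ∞ with 1/p + 1/p' = 1, and δ₁ + δ₂ = 1 real numbers. Suppose there exist positive measurable functions h₁, h₂ on X and constants C₁, C₂ > 0 such that ∫ K(x,y)^{δ₁ p'} h₁(y)^{p'} dμ(y) ≤ C₁ h₂(x)^{p'} for a.e. x, and ∫ K(x,y)^{δ₂ q} h₂(x)^{q} dμ(x) ≤ C₂ h₁(y)^{q} for a.e. y. Then the integral operator T f(x) = ∫ K(x,y) f(y) dμ(y) maps L^p(X) to L^q(X) with operator norm at most C₁^{1/p'} C₂^{1/q}. -/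

import Mathlib

/-!
Write `K = u · w` with `u = K^δ₁ h₁(y) / h₂(x)` and `w = K^δ₂ h₂(x) / h₁(y)`. The first hypothesis
says exactly that `‖u(x, ·)‖_{p'} ≤ C₁^{1/p'}`, so Hölder's inequality gives
`Tf(x) ≤ C₁^{1/p'} ‖w(x, ·) f‖_p` pointwise. Since `q / p ≥ 1`, Minkowski's integral inequality
swaps the `L^{q/p}` norm in `x` with the integral in `y`, and the second hypothesis bounds
`‖w(·, y)‖_q^q ≤ C₂`. Minkowski's integral inequality itself is proved by duality
(Hölder with the conjugate exponent) for functions with finite norm, and in general by truncation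
along the spanning sets of the σ-finite measure together with Fatou's lemma.
-/

open MeasureTheory ENNReal Filter Function Topology

theorem ENNReal.le_rpow_of_le_mul_rpow {a b : ℝ≥0∞} {r r' : ℝ} (h : r.HolderConjugate r')
    (ha : a ≠ ∞) (hab : a ≤ b * a ^ (1 / r')) : a ≤ b ^ r := by
  rcases eq_or_ne a 0 with rfl | ha₀
  · exact zero_le
  have hsplit : a ^ r⁻¹ * a ^ (1 / r') = a := by
    rw [← ENNReal.rpow_add _ _ ha₀ ha, one_div, h.inv_add_inv_eq_one, ENNReal.rpow_one]
  rw [← ENNReal.rpow_inv_le_iff h.pos, ← ENNReal.mul_le_mul_iff_left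
    (ENNReal.rpow_pos (pos_iff_ne_zero.2 ha₀) ha).ne'
    (ENNReal.rpow_ne_top_of_nonneg (one_div_nonneg.2 h.symm.nonneg) ha), hsplit]
  exact hab

section

variable {α β : Type*} [MeasurableSpace α] [MeasurableSpace β] {μ : Measure α} {ν : Measure β}

theorem lintegral_rpow_le_of_forall_le_of_ne_top [SigmaFinite μ] {Φ : α → ℝ≥0∞}
    (hΦ : Measurable Φ) {r : ℝ} (hr : 0 < r) {B : ℝ≥0∞}
    (h : ∀ G : α → ℝ≥0∞, Measurable G → G ≤ Φ → ∫⁻ a, G a ^ r ∂μ ≠ ∞ → ∫⁻ a, G a ^ r ∂μ ≤ B) :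
    ∫⁻ a, Φ a ^ r ∂μ ≤ B := by
  set G : ℕ → α → ℝ≥0∞ := fun n => (spanningSets μ n).indicator fun a => min (Φ a) n
  have hG : ∀ n, Measurable (G n) := fun n =>
    (hΦ.min measurable_const).indicator (measurableSet_spanningSets μ n)
  have hGΦ : ∀ n, G n ≤ Φ := fun n a =>
    (Set.indicator_le_self' (fun _ _ => zero_le) a).trans (min_le_left _ _)
  have hGfin : ∀ n, ∫⁻ a, G n a ^ r ∂μ ≠ ∞ := by
    intro n
    have hle : ∫⁻ a, G n a ^ r ∂μ ≤ (n : ℝ≥0∞) ^ r * μ (spanningSets μ n) := by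
      rw [← lintegral_indicator_const (measurableSet_spanningSets μ n)]
      refine lintegral_mono fun a => ?_
      by_cases ha : a ∈ spanningSets μ n
      · simp only [G, Set.indicator_of_mem ha]
        exact rpow_le_rpow (min_le_right _ _) hr.le
      · simp [G, Set.indicator_of_notMem ha, zero_rpow_of_pos hr]
    refine ne_top_of_le_ne_top (mul_ne_top ?_ (measure_spanningSets_lt_top μ n).ne) hle
    exact rpow_ne_top_of_nonneg hr.le (natCast_ne_top n)
  have hlim : ∀ a, Tendsto (fun n => G n a ^ r) atTop (𝓝 (Φ a ^ r)) := by
    intro a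
    have hmin : Tendsto (fun n : ℕ => min (Φ a) n) atTop (𝓝 (Φ a)) := by
      simpa using tendsto_const_nhds.min tendsto_nat_nhds_top
    refine (continuous_rpow_const.tendsto _).comp (hmin.congr' ?_)
    filter_upwards [eventually_mem_spanningSets μ a] with n hn
    simp [G, Set.indicator_of_mem hn]
  calc ∫⁻ a, Φ a ^ r ∂μ = ∫⁻ a, liminf (fun n => G n a ^ r) atTop ∂μ := by
        simp_rw [(hlim _).liminf_eq]
    _ ≤ liminf (fun n => ∫⁻ a, G n a ^ r ∂μ) atTop :=
        lintegral_liminf_le fun n => (hG n).pow_const r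
    _ ≤ B := liminf_le_of_frequently_le'
        (Frequently.of_forall fun n => h _ (hG n) (hGΦ n) (hGfin n))

theorem lintegral_rpow_le_of_le_lintegral [SFinite μ] [SFinite ν] {F : α → β → ℝ≥0∞}
    (hF : Measurable (uncurry F)) {r : ℝ} (hr : 1 < r) {G : α → ℝ≥0∞} (hG : Measurable G)
    (hGF : ∀ a, G a ≤ ∫⁻ b, F a b ∂ν) (hGfin : ∫⁻ a, G a ^ r ∂μ ≠ ∞) :
    ∫⁻ a, G a ^ r ∂μ ≤ (∫⁻ b, (∫⁻ a, F a b ^ r ∂μ) ^ (1 / r) ∂ν) ^ r := by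
  have hconj := Real.HolderConjugate.conjExponent hr
  refine le_rpow_of_le_mul_rpow hconj hGfin ?_
  calc ∫⁻ a, G a ^ r ∂μ = ∫⁻ a, G a * G a ^ (r - 1) ∂μ := by
        refine lintegral_congr fun a => ?_
        conv_lhs => rw [← add_sub_cancel 1 r]
        rw [rpow_add_of_nonneg _ _ zero_le_one (sub_nonneg.2 hr.le), rpow_one]
    _ ≤ ∫⁻ a, (∫⁻ b, F a b ∂ν) * G a ^ (r - 1) ∂μ :=
        lintegral_mono fun a => mul_le_mul_left (hGF a) _
    _ = ∫⁻ b, ∫⁻ a, F a b * G a ^ (r - 1) ∂μ ∂ν := by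
        rw [← lintegral_lintegral_swap
          (hF.mul ((hG.pow_const _).comp measurable_fst)).aemeasurable]
        exact lintegral_congr fun a => (lintegral_mul_const _ hF.of_uncurry_left).symm
    _ ≤ ∫⁻ b, (∫⁻ a, F a b ^ r ∂μ) ^ (1 / r) *
          (∫⁻ a, G a ^ r ∂μ) ^ (1 / r.conjExponent) ∂ν := by
        refine lintegral_mono fun b => (lintegral_mul_le_Lp_mul_Lq μ hconj
          hF.of_uncurry_right.aemeasurable (hG.pow_const _).aemeasurable).trans_eq ?_
        simp_rw [← rpow_mul, hconj.sub_one_mul_conj]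
    _ = _ := lintegral_mul_const' _ _ (rpow_ne_top_of_nonneg (by simp [hconj.symm.nonneg]) hGfin)

theorem lintegral_rpow_lintegral_le [SigmaFinite μ] [SFinite ν] {F : α → β → ℝ≥0∞}
    (hF : Measurable (uncurry F)) {r : ℝ} (hr : 1 ≤ r) :
    ∫⁻ a, (∫⁻ b, F a b ∂ν) ^ r ∂μ ≤ (∫⁻ b, (∫⁻ a, F a b ^ r ∂μ) ^ (1 / r) ∂ν) ^ r := by
  rcases hr.eq_or_lt with rfl | hr
  · simpa using (lintegral_lintegral_swap hF.aemeasurable).le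
  exact lintegral_rpow_le_of_forall_le_of_ne_top hF.lintegral_prod_right' (by linarith)
    fun G hG hGΦ hGfin => lintegral_rpow_le_of_le_lintegral hF hr hG hGΦ hGfin

theorem lintegral_lintegral_mul_rpow_le [SigmaFinite μ] [SFinite ν] {w : α → β → ℝ≥0∞}
    (hw : Measurable (uncurry w)) {g : β → ℝ≥0∞} (hg : Measurable g) {p q : ℝ} (hp : 0 < p)
    (hpq : p ≤ q) {C : ℝ≥0∞} (hC : ∀ᵐ b ∂ν, ∫⁻ a, w a b ^ q ∂μ ≤ C) :
    ∫⁻ a, (∫⁻ b, (w a b * g b) ^ p ∂ν) ^ (q / p) ∂μ ≤ C * (∫⁻ b, g b ^ p ∂ν) ^ (q / p) := by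
  have hq : 0 < q := hp.trans_le hpq
  have hcol : ∀ᵐ b ∂ν, (∫⁻ a, ((w a b * g b) ^ p) ^ (q / p) ∂μ) ^ (1 / (q / p)) ≤
      C ^ (p / q) * g b ^ p := by
    filter_upwards [hC] with b hb
    have hsplit : ∫⁻ a, ((w a b * g b) ^ p) ^ (q / p) ∂μ = (∫⁻ a, w a b ^ q ∂μ) * g b ^ q := by
      simp_rw [← rpow_mul, mul_div_cancel₀ q hp.ne', mul_rpow_of_nonneg _ _ hq.le]
      exact lintegral_mul_const _ (hw.of_uncurry_right.pow_const q)
    rw [hsplit, one_div_div, mul_rpow_of_nonneg _ _ (by positivity), ← rpow_mul,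
      mul_div_cancel₀ p hq.ne']
    exact mul_le_mul_left (rpow_le_rpow hb (by positivity)) _
  calc _ ≤ (∫⁻ b, (∫⁻ a, ((w a b * g b) ^ p) ^ (q / p) ∂μ) ^ (1 / (q / p)) ∂ν) ^ (q / p) :=
        lintegral_rpow_lintegral_le ((hw.mul (hg.comp measurable_snd)).pow_const p)
          ((one_le_div hp).2 hpq)
    _ ≤ (C ^ (p / q) * ∫⁻ b, g b ^ p ∂ν) ^ (q / p) := by
        rw [← lintegral_const_mul _ (hg.pow_const p)]
        exact rpow_le_rpow (lintegral_mono_ae hcol) (by positivity)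
    _ = C * (∫⁻ b, g b ^ p ∂ν) ^ (q / p) := by
        rw [mul_rpow_of_nonneg _ _ (by positivity), ← rpow_mul,
          div_mul_div_cancel₀ hq.ne', div_self hp.ne', rpow_one]

theorem schur_test_lintegral [SigmaFinite μ] [SFinite ν] {u w : α → β → ℝ≥0∞}
    (hu : Measurable (uncurry u)) (hw : Measurable (uncurry w)) {p p' q : ℝ}
    (hpp' : p.HolderConjugate p') (hpq : p ≤ q) {C₁ C₂ : ℝ≥0∞}
    (hrow : ∀ᵐ a ∂μ, ∫⁻ b, u a b ^ p' ∂ν ≤ C₁) (hcol : ∀ᵐ b ∂ν, ∫⁻ a, w a b ^ q ∂μ ≤ C₂)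
    {f : β → ℝ≥0∞} (hf : Measurable f) :
    (∫⁻ a, (∫⁻ b, u a b * w a b * f b ∂ν) ^ q ∂μ) ^ (1 / q) ≤
      C₁ ^ (1 / p') * C₂ ^ (1 / q) * (∫⁻ b, f b ^ p ∂ν) ^ (1 / p) := by
  have hp := hpp'.pos
  have hp' := hpp'.symm.pos
  have hq : 0 < q := hp.trans_le hpq
  have hwf : Measurable fun a => (∫⁻ b, (w a b * f b) ^ p ∂ν) ^ (q / p) :=
    ((hw.mul (hf.comp measurable_snd)).pow_const p).lintegral_prod_right'.pow_const _
  have hholder : ∀ᵐ a ∂μ, (∫⁻ b, u a b * w a b * f b ∂ν) ^ q ≤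
      C₁ ^ (q / p') * (∫⁻ b, (w a b * f b) ^ p ∂ν) ^ (q / p) := by
    filter_upwards [hrow] with a ha
    calc (∫⁻ b, u a b * w a b * f b ∂ν) ^ q = (∫⁻ b, u a b * (w a b * f b) ∂ν) ^ q := by
          simp_rw [mul_assoc]
      _ ≤ (C₁ ^ (1 / p') * (∫⁻ b, (w a b * f b) ^ p ∂ν) ^ (1 / p)) ^ q := by
          refine rpow_le_rpow ((lintegral_mul_le_Lp_mul_Lq ν hpp'.symm
            hu.of_uncurry_left.aemeasurable
            (hw.of_uncurry_left.mul hf).aemeasurable).trans ?_) hq.le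
          exact mul_le_mul_left (rpow_le_rpow ha (by positivity)) _
      _ = C₁ ^ (q / p') * (∫⁻ b, (w a b * f b) ^ p ∂ν) ^ (q / p) := by
          rw [mul_rpow_of_nonneg _ _ hq.le, ← rpow_mul, ← rpow_mul, one_div_mul_eq_div,
            one_div_mul_eq_div]
  calc (∫⁻ a, (∫⁻ b, u a b * w a b * f b ∂ν) ^ q ∂μ) ^ (1 / q)
      ≤ (C₁ ^ (q / p') * ∫⁻ a, (∫⁻ b, (w a b * f b) ^ p ∂ν) ^ (q / p) ∂μ) ^ (1 / q) := by
        rw [← lintegral_const_mul _ hwf]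
        exact rpow_le_rpow (lintegral_mono_ae hholder) (by positivity)
    _ ≤ (C₁ ^ (q / p') * (C₂ * (∫⁻ b, f b ^ p ∂ν) ^ (q / p))) ^ (1 / q) :=
        rpow_le_rpow (mul_le_mul_right (lintegral_lintegral_mul_rpow_le hw hf hp hpq hcol) _)
          (by positivity)
    _ = C₁ ^ (1 / p') * C₂ ^ (1 / q) * (∫⁻ b, f b ^ p ∂ν) ^ (1 / p) := by
        rw [mul_rpow_of_nonneg _ _ (by positivity), mul_rpow_of_nonneg _ _ (by positivity),
          ← rpow_mul, ← rpow_mul, div_mul_div_cancel₀' hq.ne', div_mul_div_cancel₀' hq.ne',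
          mul_assoc]

theorem lintegral_ofReal_rpow_mul_div_le {k g : α → ℝ} (hk : ∀ a, 0 ≤ k a) (hg : ∀ a, 0 ≤ g a)
    {c C δ s : ℝ} (hc : 0 < c) (hs : 0 ≤ s)
    (h : ∫⁻ a, ENNReal.ofReal (k a ^ (δ * s) * g a ^ s) ∂μ ≤ ENNReal.ofReal (C * c ^ s)) :
    ∫⁻ a, ENNReal.ofReal (k a ^ δ * g a / c) ^ s ∂μ ≤ ENNReal.ofReal C := by
  have hcs : 0 < c ^ s := Real.rpow_pos_of_pos hc s
  calc ∫⁻ a, ENNReal.ofReal (k a ^ δ * g a / c) ^ s ∂μ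
      = ∫⁻ a, ENNReal.ofReal (k a ^ (δ * s) * g a ^ s) * (ENNReal.ofReal (c ^ s))⁻¹ ∂μ := by
        refine lintegral_congr fun a => ?_
        rw [ofReal_rpow_of_nonneg (div_nonneg (mul_nonneg (Real.rpow_nonneg (hk a) δ) (hg a))
          hc.le) hs, Real.div_rpow (mul_nonneg (Real.rpow_nonneg (hk a) δ) (hg a)) hc.le,
          Real.mul_rpow (Real.rpow_nonneg (hk a) δ) (hg a), ← Real.rpow_mul (hk a),
          ofReal_div_of_pos hcs, div_eq_mul_inv]
    _ ≤ ENNReal.ofReal C := by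
        rw [lintegral_mul_const' _ _ (inv_ne_top.2 (ofReal_pos.2 hcs).ne'), ← div_eq_mul_inv]
        exact div_le_of_le_mul (h.trans_eq (ofReal_mul' hcs.le))

end

/-- Generalized Schur test: if `∫ K(x,y)^{δ₁ p'} h₁(y)^{p'} dμ(y) ≤ C₁ h₂(x)^{p'}` a.e.
and `∫ K(x,y)^{δ₂ q} h₂(x)^q dμ(x) ≤ C₂ h₁(y)^q` a.e., with `1 < p ≤ q < ∞`,
`1/p + 1/p' = 1` and `δ₁ + δ₂ = 1`, then the integral operator with nonnegative
kernel `K` maps `L^p` to `L^q` with norm at most `C₁^{1/p'} C₂^{1/q}`. -/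
theorem generalized_schur_test
    {X : Type*} [MeasurableSpace X] (μ : Measure X) [SigmaFinite μ]
    (K : X → X → ℝ) (hK : Measurable (Function.uncurry K))
    (hKnn : ∀ x y, 0 ≤ K x y)
    (p q p' : ℝ) (hp : 1 < p) (hpq : p ≤ q) 
    (hp' : 1 / p + 1 / p' = 1)
    (δ₁ δ₂ : ℝ) (hδ : δ₁ + δ₂ = 1)
    (h₁ h₂ : X → ℝ) (hh₁ : Measurable h₁) (hh₂ : Measurable h₂)
    (h₁pos : ∀ x, 0 < h₁ x) (h₂pos : ∀ x, 0 < h₂ x)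
    (C₁ C₂ : ℝ) (hC₁ : 0 < C₁) (hC₂ : 0 < C₂)
    (cond₁ : ∀ᵐ x ∂μ,
      ∫⁻ y, ENNReal.ofReal (K x y ^ (δ₁ * p') * h₁ y ^ p') ∂μ ≤
        ENNReal.ofReal (C₁ * h₂ x ^ p'))
    (cond₂ : ∀ᵐ y ∂μ,
      ∫⁻ x, ENNReal.ofReal (K x y ^ (δ₂ * q) * h₂ x ^ q) ∂μ ≤
        ENNReal.ofReal (C₂ * h₁ y ^ q)) :
    ∀ f : X → ℝ≥0∞, Measurable f →
      (∫⁻ x, (∫⁻ y, ENNReal.ofReal (K x y) * f y ∂μ) ^ q ∂μ) ^ (1 / q) ≤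
        ENNReal.ofReal (C₁ ^ (1 / p') * C₂ ^ (1 / q)) *
          (∫⁻ y, f y ^ p ∂μ) ^ (1 / p) := by
  intro f hf
  have hpp' : p.HolderConjugate p' :=
    Real.holderConjugate_iff.2 ⟨hp, by simpa only [one_div] using hp'⟩
  have hq : 0 < q := hpp'.pos.trans_le hpq
  set u : X → X → ℝ≥0∞ := fun x y => ENNReal.ofReal (K x y ^ δ₁ * h₁ y / h₂ x)
  set w : X → X → ℝ≥0∞ := fun x y => ENNReal.ofReal (K x y ^ δ₂ * h₂ x / h₁ y)
  have hKuw : ∀ x y, ENNReal.ofReal (K x y) = u x y * w x y := by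
    intro x y
    rw [← ofReal_mul (div_nonneg (mul_nonneg (Real.rpow_nonneg (hKnn x y) _) (h₁pos y).le)
      (h₂pos x).le)]
    congr 1
    field_simp [(h₁pos y).ne', (h₂pos x).ne']
    -- valid also at `K x y = 0`, where `0 ^ δ` is a junk value, because `δ₁ + δ₂ ≠ 0`
    rw [← Real.rpow_add' (hKnn x y) (by rw [hδ]; norm_num), hδ, Real.rpow_one]
  have hu : Measurable (uncurry u) :=
    (((hK.pow_const δ₁).mul (hh₁.comp measurable_snd)).div (hh₂.comp measurable_fst)).ennreal_ofReal
  have hw : Measurable (uncurry w) :=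
    (((hK.pow_const δ₂).mul (hh₂.comp measurable_fst)).div (hh₁.comp measurable_snd)).ennreal_ofReal
  have hrow : ∀ᵐ x ∂μ, ∫⁻ y, u x y ^ p' ∂μ ≤ ENNReal.ofReal C₁ := by
    filter_upwards [cond₁] with x hx
    exact lintegral_ofReal_rpow_mul_div_le (hKnn x) (fun y => (h₁pos y).le) (h₂pos x)
      hpp'.symm.nonneg hx
  have hcol : ∀ᵐ y ∂μ, ∫⁻ x, w x y ^ q ∂μ ≤ ENNReal.ofReal C₂ := by
    filter_upwards [cond₂] with y hy
    exact lintegral_ofReal_rpow_mul_div_le (hKnn · y) (fun x => (h₂pos x).le) (h₁pos y) hq.le hy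
  simp_rw [hKuw]
  rw [ofReal_mul (Real.rpow_nonneg hC₁.le _),
    ← ofReal_rpow_of_nonneg hC₁.le (one_div_nonneg.2 hpp'.symm.nonneg),
    ← ofReal_rpow_of_nonneg hC₂.le (one_div_nonneg.2 hq.le)]
  exact schur_test_lintegral hu hw hpp' hpq hrow hcol hf
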